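/- 1 − J(A,B), where J is the Jaccard similarity, is a metric on finite nonempty subsets of a fixed set (the Jaccard distance satisfies the triangle inequality). -/
import Mathlib

lemma jaccard_aux (m x p q d1 d2 : ℝ) (hm : 0 ≤ m) (hp : 0 ≤ p)
    (hq : 0 ≤ q) (hd1 : 0 < d1) (hd2 : 0 < d2) (h1 : d1 ≤ m + p + q)
    (h2 : d2 ≤ m + p + q) (hxpq : x ≤ p + q) (hmx : 0 < m + x) :
    x / (m + x) ≤ p / d1 + q / d2 := by
  have hmpq : 0 < m + p + q := lt_of_lt_of_le hd1 h1
  have h3 : x / (m + x) ≤ (p + q) / (m + p + q) := by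
    rw [div_le_div_iff₀ hmx hmpq]
    nlinarith
  have h4 : (p + q) / (m + p + q) = p / (m + p + q) + q / (m + p + q) := by ring
  have h5 : p / (m + p + q) ≤ p / d1 := by gcongr
  have h6 : q / (m + p + q) ≤ q / d2 := by gcongr
  linarith

/-- The Jaccard distance d(A,B) = 1 − |A ∩ B|/|A ∪ B| satisfies the triangle
inequality on finite nonempty sets. -/
theorem jaccard_distance_triangle {α : Type*} [DecidableEq α] (A B C : Finset α)
    (hA : A.Nonempty) (hB : B.Nonempty) (hC : C.Nonempty) :
    1 - ((A ∩ C).card : ℝ) / (A ∪ C).card ≤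
      (1 - ((A ∩ B).card : ℝ) / (A ∪ B).card) +
      (1 - ((B ∩ C).card : ℝ) / (B ∪ C).card) := by
  have decomp : ∀ X Y : Finset α,
      (X ∪ Y).card = (X ∩ Y).card + ((X \ Y).card + (Y \ X).card) := by
    intro X Y
    have h1 := Finset.card_sdiff_add_card X Y
    have h2 := Finset.card_inter_add_card_sdiff Y X
    have h3 : (Y ∩ X).card = (X ∩ Y).card := by rw [Finset.inter_comm]
    omega
  have tAC : (A \ C).card ≤ (A \ B).card + (B \ C).card := by
    calc (A \ C).card ≤ ((A \ B) ∪ (B \ C)).card := by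
          apply Finset.card_le_card
          intro y hy
          simp only [Finset.mem_sdiff, Finset.mem_union] at *
          by_cases hyB : y ∈ B
          · exact Or.inr ⟨hyB, hy.2⟩
          · exact Or.inl ⟨hy.1, hyB⟩
      _ ≤ (A \ B).card + (B \ C).card := Finset.card_union_le _ _
  have tCA : (C \ A).card ≤ (C \ B).card + (B \ A).card := by
    calc (C \ A).card ≤ ((C \ B) ∪ (B \ A)).card := by
          apply Finset.card_le_card
          intro y hy
          simp only [Finset.mem_sdiff, Finset.mem_union] at *
          by_cases hyB : y ∈ B
          · exact Or.inr ⟨hyB, hy.2⟩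
          · exact Or.inl ⟨hy.1, hyB⟩
      _ ≤ (C \ B).card + (B \ A).card := Finset.card_union_le _ _
  have kAB : (A ∩ B).card ≤ (A ∩ C).card + (B \ C).card := by
    calc (A ∩ B).card ≤ ((A ∩ C) ∪ (B \ C)).card := by
          apply Finset.card_le_card
          intro y hy
          simp only [Finset.mem_inter, Finset.mem_sdiff, Finset.mem_union] at *
          by_cases hyC : y ∈ C
          · exact Or.inl ⟨hy.1, hyC⟩
          · exact Or.inr ⟨hy.2, hyC⟩
      _ ≤ (A ∩ C).card + (B \ C).card := Finset.card_union_le _ _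
  have kBC : (B ∩ C).card ≤ (A ∩ C).card + (B \ A).card := by
    calc (B ∩ C).card ≤ ((A ∩ C) ∪ (B \ A)).card := by
          apply Finset.card_le_card
          intro y hy
          simp only [Finset.mem_inter, Finset.mem_sdiff, Finset.mem_union] at *
          by_cases hyA : y ∈ A
          · exact Or.inl ⟨hyA, hy.2⟩
          · exact Or.inr ⟨hy.1, hyA⟩
      _ ≤ (A ∩ C).card + (B \ A).card := Finset.card_union_le _ _
  have hAB : 0 < ((A ∪ B).card : ℝ) := by
    exact_mod_cast Finset.card_pos.mpr (hA.mono Finset.subset_union_left)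
  have hBC : 0 < ((B ∪ C).card : ℝ) := by
    exact_mod_cast Finset.card_pos.mpr (hB.mono Finset.subset_union_left)
  have hAC : 0 < ((A ∪ C).card : ℝ) := by
    exact_mod_cast Finset.card_pos.mpr (hA.mono Finset.subset_union_left)
  have eAC : ((A ∪ C).card : ℝ)
      = ((A ∩ C).card : ℝ) + (((A \ C).card : ℝ) + ((C \ A).card : ℝ)) := by
    push_cast [decomp A C]; ring
  have eAB : ((A ∪ B).card : ℝ)
      = ((A ∩ B).card : ℝ) + (((A \ B).card : ℝ) + ((B \ A).card : ℝ)) := by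
    push_cast [decomp A B]; ring
  have eBC : ((B ∪ C).card : ℝ)
      = ((B ∩ C).card : ℝ) + (((B \ C).card : ℝ) + ((C \ B).card : ℝ)) := by
    push_cast [decomp B C]; ring
  have key := jaccard_aux ((A ∩ C).card : ℝ)
      (((A \ C).card : ℝ) + ((C \ A).card : ℝ))
      (((A \ B).card : ℝ) + ((B \ A).card : ℝ))
      (((B \ C).card : ℝ) + ((C \ B).card : ℝ))
      ((A ∪ B).card : ℝ) ((B ∪ C).card : ℝ)
      (by positivity) (by positivity) (by positivity) hAB hBC
      (by  -- d1 ≤ m + p + q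
        have h : ((A ∩ B).card : ℝ) ≤ ((A ∩ C).card : ℝ) + ((B \ C).card : ℝ) := by
          exact_mod_cast kAB
        have h0 : (0:ℝ) ≤ ((C \ B).card : ℝ) := by positivity
        linarith [eAB])
      (by
        have h : ((B ∩ C).card : ℝ) ≤ ((A ∩ C).card : ℝ) + ((B \ A).card : ℝ) := by
          exact_mod_cast kBC
        have h0 : (0:ℝ) ≤ ((A \ B).card : ℝ) := by positivity
        linarith [eBC])
      (by
        have t1 : ((A \ C).card : ℝ) ≤ ((A \ B).card : ℝ) + ((B \ C).card : ℝ) := by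
          exact_mod_cast tAC
        have t2 : ((C \ A).card : ℝ) ≤ ((C \ B).card : ℝ) + ((B \ A).card : ℝ) := by
          exact_mod_cast tCA
        linarith)
      (by rw [← eAC]; exact hAC)
  have g1 : 1 - ((A ∩ C).card : ℝ) / ((A ∪ C).card : ℝ)
      = (((A \ C).card : ℝ) + ((C \ A).card : ℝ))
        / (((A ∩ C).card : ℝ) + (((A \ C).card : ℝ) + ((C \ A).card : ℝ))) := by
    rw [← eAC, eq_div_iff (ne_of_gt hAC), sub_mul, div_mul_cancel₀ _ (ne_of_gt hAC)]
    linarith [eAC]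
  have g2 : 1 - ((A ∩ B).card : ℝ) / ((A ∪ B).card : ℝ)
      = (((A \ B).card : ℝ) + ((B \ A).card : ℝ)) / ((A ∪ B).card : ℝ) := by
    rw [eq_div_iff (ne_of_gt hAB), sub_mul, div_mul_cancel₀ _ (ne_of_gt hAB)]
    linarith [eAB]
  have g3 : 1 - ((B ∩ C).card : ℝ) / ((B ∪ C).card : ℝ)
      = (((B \ C).card : ℝ) + ((C \ B).card : ℝ)) / ((B ∪ C).card : ℝ) := by
    rw [eq_div_iff (ne_of_gt hBC), sub_mul, div_mul_cancel₀ _ (ne_of_gt hBC)]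
    linarith [eBC]
  rw [g1, g2, g3]
  exact key
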